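/- Let A be a nonempty type, C a compact topological space, ĉ : A → C a (pure) mechanism, v₀ : A → ℝ bounded above, ũ : C → ℝ continuous, and v : C → ℝᴺ continuous and injective. Then for Lebesgue-almost every λ ∈ ℝᴺ the following holds: any two actions a, a' ∈ A that both attain sup_{a'' ∈ A} [v₀(a'') + ũ(ĉ(a'')) + ⟨λ, v(ĉ(a''))⟩] satisfy ĉ(a) = ĉ(a'). -/

import Mathlib

/-!
The value function `F λ = sup_a (v₀ a + ũ (ĉ a) + ⟨λ, v (ĉ a)⟩)` is a supremum of affine functions
of `λ` with uniformly bounded slopes, hence Lipschitz, hence differentiable almost everywhere by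
Rademacher's theorem. Each optimal action's affine function touches `F` from below at `λ`, so its
slope `v (ĉ a)` equals the gradient of `F` there; injectivity of `v` then pins down `ĉ a`.
-/

open MeasureTheory Set Filter Topology
open scoped NNReal

theorem HasFDerivAt.eq_of_eventually_le_of_eq {E : Type*} [NormedAddCommGroup E]
    [NormedSpace ℝ E] {f g : E → ℝ} {f' g' : StrongDual ℝ E} {x : E} (hf : HasFDerivAt f f' x)
    (hg : HasFDerivAt g g' x) (hle : ∀ᶠ y in 𝓝 x, f y ≤ g y) (heq : f x = g x) : f' = g' := by
  have hmin : IsLocalMin (g - f) x := hle.mono fun y hy => by simp [heq]; linarith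
  exact (sub_eq_zero.1 (hmin.hasFDerivAt_eq_zero (hg.sub hf))).symm

section Envelope

variable {X ι : Type*} [PseudoMetricSpace X] {f : ι → X → ℝ} {K : ℝ≥0} {x₀ : X}

theorem LipschitzWith.bddAbove_range_apply (hf : ∀ i, LipschitzWith K (f i))
    (hbdd : BddAbove (range fun i => f i x₀)) (x : X) : BddAbove (range fun i => f i x) := by
  obtain ⟨M, hM⟩ := hbdd
  refine ⟨M + K * dist x x₀, forall_mem_range.2 fun i => ?_⟩
  linarith [(hf i).le_add_mul x x₀, hM (mem_range_self i)]

theorem LipschitzWith.ciSup [Nonempty ι] (hf : ∀ i, LipschitzWith K (f i))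
    (hbdd : BddAbove (range fun i => f i x₀)) : LipschitzWith K fun x => ⨆ i, f i x := by
  refine LipschitzWith.of_le_add_mul K fun x y => ciSup_le fun i => ?_
  linarith [(hf i).le_add_mul x y, le_ciSup (bddAbove_range_apply hf hbdd y) i]

end Envelope

theorem ae_slope_eq_of_attains_iSup_affine {E : Type*} [NormedAddCommGroup E]
    [NormedSpace ℝ E] [FiniteDimensional ℝ E] [MeasurableSpace E] [BorelSpace E]
    (μ : Measure E) [μ.IsAddHaarMeasure] {ι : Type*} [Nonempty ι] {c : ι → ℝ}
    {ℓ : ι → StrongDual ℝ E} (hc : BddAbove (range c)) (hℓ : Bornology.IsBounded (range ℓ)) :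
    ∀ᵐ x ∂μ, ∀ i j, c i + ℓ i x = ⨆ k, (c k + ℓ k x) → c j + ℓ j x = ⨆ k, (c k + ℓ k x) →
      ℓ i = ℓ j := by
  obtain ⟨K, hK⟩ := isBounded_iff_forall_norm_le.1 hℓ
  have hlip : ∀ i, LipschitzWith K.toNNReal fun x => c i + ℓ i x := fun i => by
    have hℓK : ‖ℓ i‖₊ ≤ K.toNNReal :=
      (Real.le_toNNReal_iff_coe_le ((norm_nonneg _).trans (hK _ (mem_range_self i)))).2
        (hK _ (mem_range_self i))
    simpa using (LipschitzWith.const (c i)).add ((ℓ i).lipschitz.weaken hℓK)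
  have hbdd : BddAbove (range fun i => c i + ℓ i 0) := by simpa using hc
  filter_upwards [(LipschitzWith.ciSup hlip hbdd).ae_differentiableAt] with x hx
  have slope_eq : ∀ i, c i + ℓ i x = ⨆ k, (c k + ℓ k x) → ℓ i = fderiv ℝ _ x := fun i hi =>
    ((ℓ i).hasFDerivAt.const_add (c i)).eq_of_eventually_le_of_eq hx.hasFDerivAt
      (Eventually.of_forall fun y => le_ciSup (LipschitzWith.bddAbove_range_apply hlip hbdd y) i) hi
  exact fun i j hi hj => (slope_eq i hi).trans (slope_eq j hj).symm

/-- Proposition 2(b)(ii) for pure mechanisms — with a prevalent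
utility `ũ(c) + ⟨λ, v(c)⟩` over consequences (`v` injective), an action payoff
`v₀` bounded above, and a pure mechanism `ĉ : A → C` into a compact space, for
Lebesgue-almost every `λ` any two optimal actions induce the same consequence. -/
theorem stmt8 {A : Type*} [Nonempty A] {C : Type*} [TopologicalSpace C]
    [CompactSpace C] {N : ℕ}
    (chat : A → C)
    (v₀ : A → ℝ) (hv₀ : BddAbove (Set.range v₀))
    (utilde : C → ℝ) (hutilde : Continuous utilde)
    (v : C → (Fin N → ℝ)) (hv : Continuous v) (hvinj : Function.Injective v) :
    ∀ᵐ lam : (Fin N → ℝ) ∂volume, ∀ a a' : A,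
      v₀ a + utilde (chat a) + ∑ k, lam k * v (chat a) k
        = (⨆ a'' : A, (v₀ a'' + utilde (chat a'') + ∑ k, lam k * v (chat a'') k)) →
      v₀ a' + utilde (chat a') + ∑ k, lam k * v (chat a') k
        = (⨆ a'' : A, (v₀ a'' + utilde (chat a'') + ∑ k, lam k * v (chat a'') k)) →
      chat a = chat a' := by
  obtain ⟨Φ, hΦ⟩ : ∃ Φ : (Fin N → ℝ) ≃L[ℝ] StrongDual ℝ (Fin N → ℝ),
      ∀ w lam, Φ w lam = ∑ k, lam k * w k :=
    ⟨((dotProductEquiv ℝ (Fin N)).trans LinearMap.toContinuousLinearMap).toContinuousLinearEquiv,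
      fun w lam => by simp [dotProduct, mul_comm]⟩
  have hc : BddAbove (range fun a => v₀ a + utilde (chat a)) := by
    obtain ⟨M₀, hM₀⟩ := hv₀
    obtain ⟨M, hM⟩ := (isCompact_range hutilde).bddAbove
    exact ⟨M₀ + M, forall_mem_range.2 fun a =>
      add_le_add (hM₀ (mem_range_self a)) (hM (mem_range_self (chat a)))⟩
  have hℓ : Bornology.IsBounded (range fun a => Φ (v (chat a))) :=
    (isCompact_range (Φ.continuous.comp hv)).isBounded.subset
      (range_comp_subset_range chat (Φ ∘ v))
  filter_upwards [ae_slope_eq_of_attains_iSup_affine volume hc hℓ] with lam h a a' ha ha'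
  simp only [hΦ] at h
  exact hvinj (Φ.injective (h a a' ha ha'))
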